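/- arXiv:2601.03126 — 5 statements merged into one kernel-verified Lean document; each statement's English description precedes it below -/
import Mathlib

section
/- Let A be a finite abelian group with subgroups H, K ⊆ A such that A is the internal direct sum of H and K (H ∩ K = 0 and H + K = A). Then there exists a symmetric duality φ of A such that K = 𝔏_φ(H) = ℜ_φ(H) and H = 𝔏_φ(K) = ℜ_φ(K). -/
/-- A duality of a finite abelian group `A`: a group isomorphism from `A` to its
character group `Â = AddChar A ℂˣ`, encoded as a bijective map respecting the operations. -/
def IsDuality {A : Type*} [AddCommGroup A] (φ : A → AddChar A ℂˣ) : Prop :=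
  Function.Bijective φ ∧ ∀ a b : A, φ (a + b) = φ a * φ b

/-- The left dual of a set `S ⊆ A`: all `x` with `Φ(x,h) = φ(x)(h) = 1` for all `h ∈ S`. -/
def lDual {A : Type*} [AddCommGroup A] (φ : A → AddChar A ℂˣ) (S : Set A) : Set A :=
  {x | ∀ h ∈ S, φ x h = 1}

/-- The right dual of a set `S ⊆ A`: all `x` with `Φ(h,x) = φ(h)(x) = 1` for all `h ∈ S`. -/
def rDual {A : Type*} [AddCommGroup A] (φ : A → AddChar A ℂˣ) (S : Set A) : Set A :=
  {x | ∀ h ∈ S, φ h x = 1}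

/-!
Every finite abelian group is a direct sum of cyclic groups `ZMod n`, and `ZMod n` carries the
symmetric nondegenerate pairing `(x, y) ↦ exp (2πi x y / n)`; hence every finite abelian group has
a symmetric duality. Pairing `A = H ⊕ K` by such dualities of `H` and `K`, with `H` and `K`
orthogonal, gives a symmetric pairing on `A` for which the dual of `H` is exactly `K`: writing
`x = h + k`, pairing `x` with `H` only sees `h`. Symmetrically the dual of `K` is `H`, so the kernel
of the pairing lies in `H ∩ K = 0`, and an injective homomorphism `A → Â` is bijective because
`|Â| = |A|`.
-/

open Function

namespace AddChar

variable {G G' : Type*} [AddCommGroup G] [AddCommGroup G'] {M : Type*} [CommGroup M]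

/-- Pairings multiplicative in each variable are encoded as characters with values in characters;
a duality `φ` of a finite group is then exactly an injective such pairing `β` with `φ = ⇑β`. -/
def bichar (Φ : G → G' → M) (map_add_left : ∀ a b c, Φ (a + b) c = Φ a c * Φ b c)
    (map_add_right : ∀ a b c, Φ a (b + c) = Φ a b * Φ a c) : AddChar G (AddChar G' M) where
  toFun a :=
    { toFun := Φ a
      map_zero_eq_one' := (left_eq_mul (a := Φ a 0)).mp <| by rw [← map_add_right, add_zero]
      map_add_eq_mul' := map_add_right a }
  map_zero_eq_one' := ext _ _ fun c ↦ show Φ 0 c = 1 from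
    (left_eq_mul (a := Φ 0 c)).mp <| by rw [← map_add_left, add_zero]
  map_add_eq_mul' a b := ext _ _ (map_add_left a b)

@[simp]
lemma bichar_apply (Φ : G → G' → M) (hl hr) (a : G) (b : G') : bichar Φ hl hr a b = Φ a b := rfl

def IsSymm (β : AddChar G (AddChar G M)) : Prop := ∀ a b, β a b = β b a

def bicharComp (β : AddChar G' (AddChar G' M)) (f : G →+ G') : AddChar G (AddChar G M) :=
  bichar (fun a b ↦ β (f a) (f b)) (fun _ _ _ ↦ by simp [map_add_eq_mul])
    (fun _ _ _ ↦ by simp [map_add_eq_mul])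

@[simp]
lemma bicharComp_apply (β : AddChar G' (AddChar G' M)) (f : G →+ G') (a b : G) :
    bicharComp β f a b = β (f a) (f b) := rfl

lemma bicharComp_comp {G'' : Type*} [AddCommGroup G''] (β : AddChar G'' (AddChar G'' M))
    (f : G' →+ G'') (g : G →+ G') : bicharComp (bicharComp β f) g = bicharComp β (f.comp g) :=
  rfl

lemma IsSymm.bicharComp {β : AddChar G' (AddChar G' M)} (hβ : β.IsSymm) (f : G →+ G') :
    (bicharComp β f).IsSymm :=
  fun a b ↦ hβ (f a) (f b)

lemma bicharComp_injective {β : AddChar G' (AddChar G' M)} (hβ : Injective β) {f : G →+ G'}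
    (hf : Bijective f) : Injective (bicharComp β f) := by
  refine injective_iff.2 fun a ha ↦ hf.1 ?_
  rw [map_zero]
  refine injective_iff.1 hβ (ext _ _ fun b ↦ ?_)
  obtain ⟨c, rfl⟩ := hf.2 b
  exact DFunLike.congr_fun ha c

def bicharMap {N : Type*} [CommGroup N] (f : M →* N) (β : AddChar G (AddChar G M)) :
    AddChar G (AddChar G N) :=
  bichar (fun a b ↦ f (β a b)) (fun _ _ _ ↦ by simp [map_add_eq_mul])
    (fun _ _ _ ↦ by simp [map_add_eq_mul])

@[simp]
lemma bicharMap_apply {N : Type*} [CommGroup N] (f : M →* N) (β : AddChar G (AddChar G M))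
    (a b : G) : bicharMap f β a b = f (β a b) := rfl

lemma IsSymm.bicharMap {N : Type*} [CommGroup N] {β : AddChar G (AddChar G M)} (hβ : β.IsSymm)
    (f : M →* N) : (bicharMap f β).IsSymm :=
  fun a b ↦ congrArg f (hβ a b)

lemma bicharMap_injective {N : Type*} [CommGroup N] {β : AddChar G (AddChar G M)}
    (hβ : Injective β) {f : M →* N} (hf : Injective f) : Injective (bicharMap f β) :=
  injective_iff.2 fun _ ha ↦ injective_iff.1 hβ <| ext _ _ fun b ↦
    (map_eq_one_iff f hf).1 (DFunLike.congr_fun ha b)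

def prodBichar (β : AddChar G (AddChar G M)) (γ : AddChar G' (AddChar G' M)) :
    AddChar (G × G') (AddChar (G × G') M) :=
  bichar (fun p q ↦ β p.1 q.1 * γ p.2 q.2)
    (fun _ _ _ ↦ by
      simp only [Prod.fst_add, Prod.snd_add, map_add_eq_mul, mul_apply, mul_mul_mul_comm])
    (fun _ _ _ ↦ by simp only [Prod.fst_add, Prod.snd_add, map_add_eq_mul, mul_mul_mul_comm])

@[simp]
lemma prodBichar_apply (β : AddChar G (AddChar G M)) (γ : AddChar G' (AddChar G' M))
    (p q : G × G') : prodBichar β γ p q = β p.1 q.1 * γ p.2 q.2 := rfl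

lemma IsSymm.prodBichar {β : AddChar G (AddChar G M)} {γ : AddChar G' (AddChar G' M)}
    (hβ : β.IsSymm) (hγ : γ.IsSymm) : (prodBichar β γ).IsSymm :=
  fun p q ↦ by simp only [prodBichar_apply, hβ p.1, hγ p.2]

lemma bicharComp_prodBichar_inl (β : AddChar G (AddChar G M)) (γ : AddChar G' (AddChar G' M)) :
    bicharComp (prodBichar β γ) (AddMonoidHom.inl G G') = β := by
  ext a b; simp

lemma bicharComp_prodBichar_inr (β : AddChar G (AddChar G M)) (γ : AddChar G' (AddChar G' M)) :
    bicharComp (prodBichar β γ) (AddMonoidHom.inr G G') = γ := by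
  ext a b; simp

section Pi

variable {ι : Type*} [Fintype ι] {H : ι → Type*} [∀ i, AddCommGroup (H i)]

def piBichar (β : ∀ i, AddChar (H i) (AddChar (H i) M)) :
    AddChar (∀ i, H i) (AddChar (∀ i, H i) M) :=
  bichar (fun a b ↦ ∏ i, β i (a i) (b i))
    (fun _ _ _ ↦ by simp only [Pi.add_apply, map_add_eq_mul, mul_apply, Finset.prod_mul_distrib])
    (fun _ _ _ ↦ by simp only [Pi.add_apply, map_add_eq_mul, Finset.prod_mul_distrib])

@[simp]
lemma piBichar_apply (β : ∀ i, AddChar (H i) (AddChar (H i) M)) (a b : ∀ i, H i) :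
    piBichar β a b = ∏ i, β i (a i) (b i) := rfl

lemma IsSymm.piBichar {β : ∀ i, AddChar (H i) (AddChar (H i) M)} (hβ : ∀ i, (β i).IsSymm) :
    (piBichar β).IsSymm :=
  fun a b ↦ by simp only [piBichar_apply, fun i ↦ hβ i (a i)]

lemma piBichar_injective {β : ∀ i, AddChar (H i) (AddChar (H i) M)} (hβ : ∀ i, Injective (β i)) :
    Injective (piBichar β) := by
  classical
  refine injective_iff.2 fun a ha ↦ funext fun i ↦ injective_iff.1 (hβ i) <| ext _ _ fun x ↦ ?_
  have hx := DFunLike.congr_fun ha (Pi.single i x)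
  rwa [piBichar_apply, Fintype.prod_eq_single i fun j hj ↦ by simp [Pi.single_eq_of_ne hj],
    Pi.single_eq_same] at hx

end Pi

lemma isSymm_zmodHom (n : ℕ) [NeZero n] : (zmodHom (n := n)).IsSymm := by
  intro x y
  obtain ⟨x, rfl⟩ := ZMod.intCast_surjective x
  obtain ⟨y, rfl⟩ := ZMod.intCast_surjective y
  simp [zmodHom, mul_comm]

end AddChar

open AddChar

theorem exists_isSymm_injective_bichar (G : Type*) [AddCommGroup G] [Finite G] :
    ∃ β : AddChar G (AddChar G ℂˣ), β.IsSymm ∧ Injective β := by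
  obtain ⟨ι, _, n, hn, ⟨e⟩⟩ := AddCommGroup.equiv_directSum_zmod_of_finite' G
  have : ∀ i, NeZero (n i) := fun i ↦ ⟨by have := hn i; omega⟩
  let e' : G ≃+ ∀ i, ZMod (n i) := e.trans (DirectSum.addEquivProd _)
  let β : AddChar (∀ i, ZMod (n i)) (AddChar (∀ i, ZMod (n i)) Circle) :=
    piBichar fun i ↦ zmodHom
  have hβ : Injective β := piBichar_injective fun i ↦ zmod_injective
  refine ⟨bicharComp (bicharMap Circle.toUnits β) e'.toAddMonoidHom, ?_, ?_⟩
  · exact ((IsSymm.piBichar fun i ↦ isSymm_zmodHom (n i)).bicharMap _).bicharComp _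
  · exact bicharComp_injective (bicharMap_injective hβ unitSphereToUnits_injective) e'.bijective

namespace AddSubgroup

variable {A : Type*} [AddCommGroup A] {H K : AddSubgroup A}

noncomputable def prodEquivOfIsCompl (hc : IsCompl H K) : H × K ≃+ A :=
  (Submodule.prodEquivOfIsCompl _ _ (toIntSubmodule.isCompl hc)).toAddEquiv

lemma prodEquivOfIsCompl_symm_apply_left (hc : IsCompl H K) (h : H) :
    (prodEquivOfIsCompl hc).symm h = (h, 0) :=
  Submodule.prodEquivOfIsCompl_symm_apply_left _ _ (toIntSubmodule.isCompl hc) h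

lemma prodEquivOfIsCompl_symm_apply_right (hc : IsCompl H K) (k : K) :
    (prodEquivOfIsCompl hc).symm k = (0, k) :=
  Submodule.prodEquivOfIsCompl_symm_apply_right _ _ (toIntSubmodule.isCompl hc) k

end AddSubgroup

namespace AddChar

variable {A : Type*} [AddCommGroup A] {H K : AddSubgroup A} {M : Type*} [CommGroup M]

noncomputable def orthogonalSum (hc : IsCompl H K) (βH : AddChar H (AddChar H M))
    (βK : AddChar K (AddChar K M)) : AddChar A (AddChar A M) :=
  bicharComp (prodBichar βH βK) (AddSubgroup.prodEquivOfIsCompl hc).symm.toAddMonoidHom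

lemma IsSymm.orthogonalSum {βH : AddChar H (AddChar H M)} {βK : AddChar K (AddChar K M)}
    (hc : IsCompl H K) (hβH : βH.IsSymm) (hβK : βK.IsSymm) : (orthogonalSum hc βH βK).IsSymm :=
  (hβH.prodBichar hβK).bicharComp _

variable (hc : IsCompl H K) (βH : AddChar H (AddChar H M)) (βK : AddChar K (AddChar K M))

lemma bicharComp_orthogonalSum_subtype_left :
    bicharComp (orthogonalSum hc βH βK) H.subtype = βH := by
  ext h h'
  simp [orthogonalSum, AddSubgroup.prodEquivOfIsCompl_symm_apply_left]

lemma bicharComp_orthogonalSum_subtype_right :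
    bicharComp (orthogonalSum hc βH βK) K.subtype = βK := by
  ext k k'
  simp [orthogonalSum, AddSubgroup.prodEquivOfIsCompl_symm_apply_right]

lemma orthogonalSum_apply_right_left {k h : A} (hk : k ∈ K) (hh : h ∈ H) :
    orthogonalSum hc βH βK k h = 1 := by
  simp [orthogonalSum, AddSubgroup.prodEquivOfIsCompl_symm_apply_left hc ⟨h, hh⟩,
    AddSubgroup.prodEquivOfIsCompl_symm_apply_right hc ⟨k, hk⟩]

lemma orthogonalSum_apply_left_right {h k : A} (hh : h ∈ H) (hk : k ∈ K) :
    orthogonalSum hc βH βK h k = 1 := by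
  simp [orthogonalSum, AddSubgroup.prodEquivOfIsCompl_symm_apply_left hc ⟨h, hh⟩,
    AddSubgroup.prodEquivOfIsCompl_symm_apply_right hc ⟨k, hk⟩]

end AddChar

section Duality

variable {A : Type*} [AddCommGroup A]

lemma isDuality_of_injective [Finite A] {β : AddChar A (AddChar A ℂˣ)} (hβ : Injective β) :
    IsDuality β := by
  have hval : Injective ((Units.coeHom ℂ).compAddChar : AddChar A ℂˣ → AddChar A ℂ) :=
    MonoidHom.compAddChar_injective_right _ Units.val_injective
  have : Finite (AddChar A ℂˣ) := Finite.of_injective _ hval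
  cases nonempty_fintype A
  refine ⟨hβ.bijective_of_nat_card_le ?_, map_add_eq_mul β⟩
  calc Nat.card (AddChar A ℂˣ) ≤ Nat.card (AddChar A ℂ) := Nat.card_le_card_of_injective _ hval
    _ = Nat.card A := by simp only [Nat.card_eq_fintype_card, card_eq]

lemma rDual_eq_lDual {φ : A → AddChar A ℂˣ} (hφ : ∀ a b, φ a b = φ b a) (S : Set A) :
    rDual φ S = lDual φ S := by
  ext x
  exact forall₂_congr fun h _ ↦ by rw [hφ]

lemma lDual_eq_of_orthogonal {β : AddChar A (AddChar A ℂˣ)} {H K : AddSubgroup A}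
    (hs : H ⊔ K = ⊤) (horth : ∀ k ∈ K, ∀ h ∈ H, β k h = 1)
    (hH : Injective (bicharComp β H.subtype)) : lDual β H = K := by
  ext x
  refine ⟨fun hx ↦ ?_, fun hx h hh ↦ horth x hx h hh⟩
  obtain ⟨y, hy, z, hz, rfl⟩ := AddSubgroup.mem_sup.1 (hs ▸ AddSubgroup.mem_top x)
  have hy1 : bicharComp β H.subtype ⟨y, hy⟩ = bicharComp β H.subtype 0 := by
    ext h
    simpa [map_add_eq_mul, horth z hz h h.2] using hx h h.2
  obtain rfl : y = 0 := congrArg Subtype.val (hH hy1)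
  simpa using hz

end Duality

/-- If `A = H ⊕ K` internally, there is a symmetric duality for which `H` and `K` are
each other's left and right duals. -/
theorem direct_sum_duals {A : Type*} [AddCommGroup A] [Fintype A]
    (H K : AddSubgroup A) (hd : H ⊓ K = ⊥) (hs : H ⊔ K = ⊤) :
    ∃ φ : A → AddChar A ℂˣ, IsDuality φ ∧ (∀ a b : A, φ a b = φ b a) ∧
      (K : Set A) = lDual φ (H : Set A) ∧ (K : Set A) = rDual φ (H : Set A) ∧
      (H : Set A) = lDual φ (K : Set A) ∧ (H : Set A) = rDual φ (K : Set A) := by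
  have hc : IsCompl H K := .of_eq hd hs
  obtain ⟨βH, hβH_symm, hβH⟩ := exists_isSymm_injective_bichar H
  obtain ⟨βK, hβK_symm, hβK⟩ := exists_isSymm_injective_bichar K
  set β := orthogonalSum hc βH βK
  have hsymm : β.IsSymm := IsSymm.orthogonalSum hc hβH_symm hβK_symm
  have hK : lDual β H = K :=
    lDual_eq_of_orthogonal hs (fun _ hk _ hh ↦ orthogonalSum_apply_right_left hc βH βK hk hh)
      (by rwa [bicharComp_orthogonalSum_subtype_left])
  have hH : lDual β K = H :=
    lDual_eq_of_orthogonal (sup_comm H K ▸ hs)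
      (fun _ hh _ hk ↦ orthogonalSum_apply_left_right hc βH βK hh hk)
      (by rwa [bicharComp_orthogonalSum_subtype_right])
  have hinj : Injective β := (injective_iff (M := AddChar A ℂˣ)).2 fun a ha ↦ by
    have haK : a ∈ (K : Set A) := hK ▸ fun h _ ↦ by rw [ha]; rfl
    have haH : a ∈ (H : Set A) := hH ▸ fun k _ ↦ by rw [ha]; rfl
    exact AddSubgroup.mem_bot.1 (hd ▸ AddSubgroup.mem_inf.2 ⟨haH, haK⟩)
  refine ⟨β, isDuality_of_injective hinj, hsymm, hK.symm, ?_, hH.symm, ?_⟩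
  · rw [rDual_eq_lDual hsymm, hK]
  · rw [rDual_eq_lDual hsymm, hH]
end

section
/- Let p be a prime, k a natural number, and A = ℤ/p^kℤ. Suppose H, K ⊆ A are subgroups satisfying |H| · |K| = |A| = p^k. Then for every duality φ of A one has 𝔏_φ(H) = ℜ_φ(H) = K and 𝔏_φ(K) = ℜ_φ(K) = H. -/
namespace IsAddCyclic

variable {A : Type*} [AddCommGroup A] [IsAddCyclic A] [Finite A]

theorem addSubgroup_eq_ker_nsmul_card (H : AddSubgroup A) :
    H = (nsmulAddMonoidHom (Nat.card H) : A →+ A).ker := by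
  have hle : H ≤ (nsmulAddMonoidHom (Nat.card H) : A →+ A).ker := fun x hx =>
    congrArg Subtype.val (card_nsmul_eq_zero' (x := (⟨x, hx⟩ : H)))
  refine AddSubgroup.eq_of_le_of_card_ge hle (le_of_eq ?_)
  rw [card_nsmulAddMonoidHom_ker, Nat.gcd_eq_right (AddSubgroup.card_addSubgroup_dvd_card H)]

theorem range_nsmul_eq_of_card_mul_eq {H : AddSubgroup A} {m : ℕ}
    (h : Nat.card H * m = Nat.card A) : (nsmulAddMonoidHom m : A →+ A).range = H := by
  have hm : m ∣ Nat.card A := Dvd.intro_left _ h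
  have hle : (nsmulAddMonoidHom m : A →+ A).range ≤ H := by
    rw [addSubgroup_eq_ker_nsmul_card H]
    rintro _ ⟨x, rfl⟩
    simp [AddMonoidHom.mem_ker, smul_smul, h]
  refine AddSubgroup.eq_of_le_of_card_ge hle (le_of_eq ?_)
  rw [card_nsmulAddMonoidHom_range, Nat.gcd_eq_right hm, ← h,
    Nat.mul_div_cancel _ (Nat.pos_of_dvd_of_pos hm Nat.card_pos)]

end IsAddCyclic

section Duality

variable {A : Type*} [AddCommGroup A] {φ : A → AddChar A ℂˣ}

theorem map_zero_of_map_add (hadd : ∀ a b, φ (a + b) = φ a * φ b) : φ 0 = 1 := by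
  have h := hadd 0 0
  rw [zero_add] at h
  ext1 a
  exact left_eq_mul.mp congr($h a)

theorem map_nsmul_of_map_add (hadd : ∀ a b, φ (a + b) = φ a * φ b) (n : ℕ) (a : A) :
    φ (n • a) = φ a ^ n := by
  induction n with
  | zero => rw [zero_nsmul, pow_zero, map_zero_of_map_add hadd]
  | succ n ih => rw [succ_nsmul, hadd, ih, pow_succ]

theorem apply_nsmul_comm_of_map_add (hadd : ∀ a b, φ (a + b) = φ a * φ b) (n : ℕ) (a b : A) :
    φ (n • a) b = φ a (n • b) := by
  rw [map_nsmul_of_map_add hadd, AddChar.pow_apply, AddChar.map_nsmul_eq_pow]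

theorem apply_comm_of_map_add [IsAddCyclic A] [Finite A]
    (hadd : ∀ a b, φ (a + b) = φ a * φ b) (a b : A) : φ a b = φ b a := by
  obtain ⟨g, hg⟩ := IsAddCyclic.exists_addMonoid_generator (α := A)
  obtain ⟨i, rfl⟩ := (AddSubmonoid.mem_multiples_iff _ _).mp (hg a)
  obtain ⟨j, rfl⟩ := (AddSubmonoid.mem_multiples_iff _ _).mp (hg b)
  rw [apply_nsmul_comm_of_map_add hadd, apply_nsmul_comm_of_map_add hadd, smul_comm]

theorem rDual_eq_lDual_of_map_add [IsAddCyclic A] [Finite A]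
    (hadd : ∀ a b, φ (a + b) = φ a * φ b) (S : Set A) : rDual φ S = lDual φ S := by
  ext x
  simp only [rDual, lDual, Set.mem_ofPred_eq, apply_comm_of_map_add hadd x]

namespace IsDuality

theorem eq_one_iff (hφ : IsDuality φ) {x : A} : φ x = 1 ↔ x = 0 := by
  rw [← map_zero_of_map_add hφ.2, hφ.1.injective.eq_iff]

theorem lDual_range_nsmul (hφ : IsDuality φ) (m : ℕ) :
    lDual φ ((nsmulAddMonoidHom m : A →+ A).range : Set A) =
      (nsmulAddMonoidHom m : A →+ A).ker := by
  ext x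
  simp only [lDual, AddMonoidHom.coe_range, Set.forall_mem_range, nsmulAddMonoidHom_apply,
    ← apply_nsmul_comm_of_map_add hφ.2, ← AddChar.eq_one_iff, hφ.eq_one_iff, SetLike.mem_coe,
    AddMonoidHom.mem_ker, Set.mem_ofPred_eq]

theorem lDual_eq_of_card_mul_card_eq [IsAddCyclic A] [Finite A] (hφ : IsDuality φ)
    {H K : AddSubgroup A} (h : Nat.card H * Nat.card K = Nat.card A) :
    lDual φ (H : Set A) = K := by
  rw [← IsAddCyclic.range_nsmul_eq_of_card_mul_eq h, hφ.lDual_range_nsmul,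
    ← IsAddCyclic.addSubgroup_eq_ker_nsmul_card K]

end IsDuality

end Duality

/-- In `ℤ/p^kℤ`, any two subgroups satisfying the size condition are each other's left and
right duals for every duality. -/
theorem cyclic_p_group_duals {p : ℕ} (hp : p.Prime) (k : ℕ)
    (H K : AddSubgroup (ZMod (p ^ k))) (hsize : Nat.card H * Nat.card K = p ^ k) :
    ∀ φ : ZMod (p ^ k) → AddChar (ZMod (p ^ k)) ℂˣ, IsDuality φ →
      lDual φ (H : Set (ZMod (p ^ k))) = (K : Set (ZMod (p ^ k))) ∧
      rDual φ (H : Set (ZMod (p ^ k))) = (K : Set (ZMod (p ^ k))) ∧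
      lDual φ (K : Set (ZMod (p ^ k))) = (H : Set (ZMod (p ^ k))) ∧
      rDual φ (K : Set (ZMod (p ^ k))) = (H : Set (ZMod (p ^ k))) := by
  intro φ hφ
  have : NeZero (p ^ k) := ⟨pow_ne_zero k hp.ne_zero⟩
  have hHK : Nat.card H * Nat.card K = Nat.card (ZMod (p ^ k)) := by rw [Nat.card_zmod, hsize]
  have hKH : Nat.card K * Nat.card H = Nat.card (ZMod (p ^ k)) := by rw [mul_comm, hHK]
  simp only [rDual_eq_lDual_of_map_add hφ.2, hφ.lDual_eq_of_card_mul_card_eq hHK,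
    hφ.lDual_eq_of_card_mul_card_eq hKH, and_self]
end

section
/- Let p be a prime and let A be a finite elementary abelian p-group (i.e., a finite abelian group with p • a = 0 for all a ∈ A). Suppose H, K ⊆ A are subgroups satisfying |H| · |K| = |A|. Then there exists a symmetric duality φ of A such that 𝔏_φ(H) = ℜ_φ(H) = K and 𝔏_φ(K) = ℜ_φ(K) = H. -/
/-!
View `A` as a vector space over `𝔽_p`. Any two subspaces `H`, `K` have a common adapted basis:
subsets `S`, `T` of one basis span `H` and `K`. As `|S| + |T| = dim A`, some involution `σ` of
the basis maps `S` into the complement of `T`, so the symmetric nondegenerate form whose Gram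
matrix is the permutation matrix of `σ` makes `H` and `K` orthogonal; by dimension count they
are then each other's orthogonal complements. Composing this form with an injective character
`𝔽_p → ℂˣ` gives the symmetric duality.
-/

open Function Module Submodule
open LinearMap (BilinForm)

theorem Equiv.Perm.exists_involutive_mapsTo {α : Type*} [Finite α] {X Y : Set α}
    (h : X.ncard = Y.ncard) : ∃ σ : Equiv.Perm α, Involutive σ ∧ Set.MapsTo σ X Y := by
  classical
  have hcard : Nat.card ↥(X \ Y) = Nat.card ↥(Y \ X) := by
    rwa [Nat.card_coe_set_eq, Nat.card_coe_set_eq,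
      ← Set.ncard_eq_ncard_iff_ncard_sdiff_eq_ncard_sdiff]
  obtain ⟨e⟩ := Finite.card_eq.mp hcard
  set f := Equiv.extendSubtype e
  have hf : ∀ x ∈ X \ Y, f x ∈ Y \ X := fun x hx => Equiv.extendSubtype_mem e x hx
  have hf_symm : ∀ y ∈ Y \ X, f.symm y ∈ X \ Y := fun y hy => by
    by_contra hn
    exact Equiv.extendSubtype_not_mem e _ hn (by simpa [f] using hy)
  have hdisj : ∀ x ∈ Y \ X, x ∉ X \ Y := fun x hx hx' => hx.2 hx'.1
  let σ : α → α := fun x => if x ∈ X \ Y then f x else if x ∈ Y \ X then f.symm x else x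
  have hσ : Involutive σ := by
    intro x
    dsimp only [σ]
    by_cases hx : x ∈ X \ Y
    · rw [if_pos hx, if_neg (hdisj _ (hf x hx)), if_pos (hf x hx), Equiv.symm_apply_apply]
    by_cases hx' : x ∈ Y \ X
    · rw [if_neg hx, if_pos hx', if_pos (hf_symm x hx'), Equiv.apply_symm_apply]
    · rw [if_neg hx, if_neg hx', if_neg hx, if_neg hx']
  refine ⟨hσ.toPerm σ, hσ.toPerm_involutive, fun x hx => ?_⟩
  show σ x ∈ Y
  dsimp only [σ]
  by_cases hxY : x ∈ Y
  · rwa [if_neg fun h => h.2 hxY, if_neg fun h => h.2 hx]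
  · rw [if_pos ⟨hx, hxY⟩]
    exact (hf x ⟨hx, hxY⟩).1

section LinearAlgebra

variable {k V : Type*} [Field k] [AddCommGroup V] [Module k V]

theorem Submodule.exists_linearIndepOn_union_span_eq (H K : Submodule k V) :
    ∃ s t : Set V, LinearIndepOn k id (s ∪ t) ∧ span k s = H ∧ span k t = K := by
  obtain ⟨w, hwW, hw_span, hw⟩ := exists_linearIndependent k ((H ⊓ K : Submodule k V) : Set V)
  rw [span_eq] at hw_span
  have hwH : w ⊆ H := hwW.trans (SetLike.coe_subset_coe.mpr inf_le_left)
  have hwK : w ⊆ K := hwW.trans (SetLike.coe_subset_coe.mpr inf_le_right)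
  obtain ⟨s, hsH, hws, hs_span, hs⟩ := exists_linearIndepOn_id_extension hw hwH
  obtain ⟨t, htK, hwt, ht_span, ht⟩ := exists_linearIndepOn_id_extension hw hwK
  have hs_eq : span k s = H := le_antisymm (span_le.mpr hsH) fun x hx => hs_span hx
  have ht_eq : span k t = K := le_antisymm (span_le.mpr htK) fun x hx => ht_span hx
  refine ⟨s, t, ?_, hs_eq, ht_eq⟩
  -- `span (t \ w)` meets `H` inside `H ⊓ K = span w`, which it meets trivially.
  have hw_disj : Disjoint (span k w) (span k (t \ w)) := by
    rw [← Set.union_sdiff_cancel hwt, linearIndepOn_id_union_iff Set.disjoint_sdiff_right] at ht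
    exact ht.2.2
  have hH_inf : H ⊓ span k (t \ w) ≤ span k w := fun x hx =>
    hw_span ▸ ⟨hx.1, span_le.mpr (Set.sdiff_subset.trans htK) hx.2⟩
  have hH_disj : Disjoint (span k s) (span k (t \ w)) := by
    rw [hs_eq, disjoint_iff_inf_le]
    exact (le_inf hH_inf inf_le_right).trans hw_disj.le_bot
  have hst : s ∪ (t \ w) = s ∪ t := by
    ext x
    have := @hws x
    simp only [Set.mem_union, Set.mem_sdiff]
    tauto
  exact hst ▸ hs.id_union (ht.mono Set.sdiff_subset) hH_disj

theorem LinearIndepOn.finrank_span_eq_ncard {s : Set V} (hs : LinearIndepOn k id s)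
    (hfin : s.Finite) : finrank k (span k s) = s.ncard := by
  have := hfin.fintype
  rw [finrank_span_set_eq_card hs, Set.ncard_eq_toFinset_card']

theorem LinearMap.BilinForm.apply_eq_zero_of_mem_span {B : BilinForm k V} {s t : Set V}
    (h : ∀ x ∈ s, ∀ y ∈ t, B x y = 0) : ∀ x ∈ span k s, ∀ y ∈ span k t, B x y = 0 := by
  intro x hx y hy
  have hker : ∀ y ∈ t, span k s ≤ LinearMap.ker (B.flip y) := fun y hy =>
    span_le.mpr fun x hx => h x hx y hy
  have ht : span k t ≤ B.orthogonal (span k s) := span_le.mpr fun y hy =>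
    B.mem_orthogonal_iff.mpr fun x hx => hker y hy hx
  exact B.mem_orthogonal_iff.mp (ht hy) x hx

theorem LinearMap.BilinForm.orthogonal_eq_of_finrank_add [FiniteDimensional k V]
    {B : BilinForm k V} (hB : B.Nondegenerate) {H K : Submodule k V}
    (hHK : ∀ x ∈ H, ∀ y ∈ K, B x y = 0) (hdim : finrank k H + finrank k K = finrank k V) :
    B.orthogonal H = K :=
  (eq_of_le_of_finrank_le (fun y hy => B.mem_orthogonal_iff.mpr fun x hx => hHK x hx y hy)
    (by rw [B.finrank_orthogonal hB]; omega)).symm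

section PermMatrix

variable {ι : Type*} [Fintype ι] [DecidableEq ι] (b : Basis ι k V)

theorem Matrix.toBilin_permMatrix_apply (σ : Equiv.Perm ι) (i j : ι) :
    Matrix.toBilin b (σ.permMatrix k) (b i) (b j) = if σ i = j then 1 else 0 := by
  rw [← LinearMap.BilinForm.toMatrix_apply, LinearMap.BilinForm.toMatrix_toBilin]
  simp [PEquiv.toMatrix_apply]

theorem Matrix.isSymm_toBilin_permMatrix {σ : Equiv.Perm ι} (hσ : Involutive σ) :
    (Matrix.toBilin b (σ.permMatrix k)).IsSymm := by
  rw [Matrix.isSymm_toBilin_iff_isSymm, Matrix.IsSymm, Matrix.transpose_permMatrix,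
    Equiv.Perm.inv_def, Involutive.symm_eq_self_of_involutive σ hσ]

theorem Matrix.nondegenerate_toBilin_permMatrix (σ : Equiv.Perm ι) :
    (Matrix.toBilin b (σ.permMatrix k)).Nondegenerate := by
  rw [Matrix.nondegenerate_toBilin_iff, Matrix.nondegenerate_iff_det_ne_zero,
    Matrix.det_permutation]
  rcases Int.units_eq_one_or (Equiv.Perm.sign σ) with h | h <;> simp [h]

end PermMatrix

theorem LinearMap.BilinForm.exists_isSymm_nondegenerate_of_finrank_add [FiniteDimensional k V]
    (H K : Submodule k V) (hdim : finrank k H + finrank k K = finrank k V) :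
    ∃ B : BilinForm k V, B.IsSymm ∧ B.Nondegenerate ∧ ∀ x ∈ H, ∀ y ∈ K, B x y = 0 := by
  classical
  obtain ⟨s, t, hst, rfl, rfl⟩ := H.exists_linearIndepOn_union_span_eq K
  set u := hst.extend (Set.subset_univ _)
  let b : Basis u k V := Basis.extend hst
  have hb : ∀ i, b i = i := fun i => congrFun (Basis.coe_extend hst) i
  have hsu : s ∪ t ⊆ u := hst.subset_extend _
  have : Fintype u := Fintype.ofFinite u
  have hcard : ∀ r ⊆ s ∪ t, (((↑) : u → V) ⁻¹' r).ncard = finrank k (span k r) := fun r hr => by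
    rw [Set.ncard_preimage_of_injective_subset_range Subtype.val_injective
        (by simpa using hr.trans hsu),
      (hst.mono hr).finrank_span_eq_ncard ((Set.toFinite u).subset (hr.trans hsu))]
  have hcompl := Set.ncard_add_ncard_compl (((↑) : u → V) ⁻¹' t)
  rw [hcard t Set.subset_union_right, ← finrank_eq_nat_card_basis b] at hcompl
  obtain ⟨σ, hσ, hmaps⟩ := Equiv.Perm.exists_involutive_mapsTo (X := ((↑) : u → V) ⁻¹' s)
    (Y := (((↑) : u → V) ⁻¹' t)ᶜ) (by rw [hcard s Set.subset_union_left]; omega)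
  refine ⟨Matrix.toBilin b (σ.permMatrix k), Matrix.isSymm_toBilin_permMatrix b hσ,
    Matrix.nondegenerate_toBilin_permMatrix b σ,
    LinearMap.BilinForm.apply_eq_zero_of_mem_span fun x hx y hy => ?_⟩
  have hxy := Matrix.toBilin_permMatrix_apply b σ ⟨x, hsu (Or.inl hx)⟩ ⟨y, hsu (Or.inr hy)⟩
  rw [hb, hb] at hxy
  rw [hxy, if_neg]
  intro h
  exact hmaps (x := ⟨x, hsu (Or.inl hx)⟩) hx (by rw [h]; exact hy)

end LinearAlgebra

section Characters

variable {A : Type*} [AddCommGroup A]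

theorem isDuality_of_injective_s10 [Finite A] {φ : A → AddChar A ℂˣ} (hφ : Injective φ)
    (hmul : ∀ a b, φ (a + b) = φ a * φ b) : IsDuality φ := by
  have hval : Injective ((Units.coeHom ℂ).compAddChar : AddChar A ℂˣ → AddChar A ℂ) :=
    (Units.coeHom ℂ).compAddChar_injective_right Units.val_injective
  have : Fintype A := Fintype.ofFinite A
  have : Finite (AddChar A ℂˣ) := Finite.of_injective _ hval
  refine ⟨hφ.bijective_of_nat_card_le ?_, hmul⟩
  calc Nat.card (AddChar A ℂˣ) ≤ Nat.card (AddChar A ℂ) := Nat.card_le_card_of_injective _ hval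
    _ = Nat.card A := by rw [Nat.card_eq_fintype_card, Nat.card_eq_fintype_card, AddChar.card_eq]

theorem lDual_eq_rDual {φ : A → AddChar A ℂˣ} (hφ : ∀ a b, φ a b = φ b a) (S : Set A) :
    lDual φ S = rDual φ S := by
  simp only [lDual, rDual, hφ]

variable {R : Type*} [CommRing R] [Module R A]

namespace LinearMap.BilinForm

def charPairing (B : BilinForm R A) (χ : AddChar R ℂˣ) (x : A) : AddChar A ℂˣ :=
  χ.compAddMonoidHom (B x).toAddMonoidHom

variable (B : BilinForm R A) (χ : AddChar R ℂˣ)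

@[simp]
theorem charPairing_apply (x y : A) : B.charPairing χ x y = χ (B x y) := rfl

theorem charPairing_add (x y : A) :
    B.charPairing χ (x + y) = B.charPairing χ x * B.charPairing χ y := by
  ext z
  simp [AddChar.map_add_eq_mul]

variable {B χ}

theorem charPairing_comm (hB : B.IsSymm) (x y : A) :
    B.charPairing χ x y = B.charPairing χ y x := by
  simp [hB.eq x y]

theorem injective_charPairing (hB : B.SeparatingLeft) (hχ : Injective χ) :
    Injective (B.charPairing χ) := fun x y hxy => by
  refine sub_eq_zero.mp (hB _ fun z => ?_)
  rw [map_sub, LinearMap.sub_apply, sub_eq_zero]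
  exact hχ (DFunLike.congr_fun hxy z)

theorem rDual_charPairing (hχ : Injective χ) (N : Submodule R A) :
    rDual (B.charPairing χ) N = B.orthogonal N := by
  ext x
  simp [rDual, B.mem_orthogonal_iff, hχ.eq_iff' χ.map_zero_eq_one]

end LinearMap.BilinForm

end Characters

section ZModModule

variable {p : ℕ} [Fact p.Prime] {A : Type*} [AddCommGroup A] [Module (ZMod p) A] [Finite A]

theorem AddSubgroup.card_eq_pow_finrank_toZModSubmodule (H : AddSubgroup A) :
    Nat.card H = p ^ finrank (ZMod p) (toZModSubmodule p H) := by
  have : Fintype (toZModSubmodule p H) := Fintype.ofFinite _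
  calc Nat.card H = Fintype.card (toZModSubmodule p H) :=
        Nat.card_eq_fintype_card (α := toZModSubmodule p H)
    _ = p ^ finrank (ZMod p) (toZModSubmodule p H) := by
      rw [Module.card_eq_pow_finrank (K := ZMod p), ZMod.card]

theorem AddSubgroup.finrank_add_finrank_eq_of_card_mul_card {H K : AddSubgroup A}
    (hsize : Nat.card H * Nat.card K = Nat.card A) :
    finrank (ZMod p) (toZModSubmodule p H) + finrank (ZMod p) (toZModSubmodule p K) =
      finrank (ZMod p) A := by
  have : Fintype A := Fintype.ofFinite A
  rw [H.card_eq_pow_finrank_toZModSubmodule (p := p),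
    K.card_eq_pow_finrank_toZModSubmodule (p := p), ← pow_add, Nat.card_eq_fintype_card,
    Module.card_eq_pow_finrank (K := ZMod p), ZMod.card] at hsize
  exact Nat.pow_right_injective (Fact.out : p.Prime).two_le hsize

end ZModModule

/-- In a finite elementary abelian `p`-group, any two subgroups satisfying the size
condition are each other's duals for some symmetric duality. -/
theorem elementary_abelian_size_duals {p : ℕ} (hp : p.Prime) {A : Type*} [AddCommGroup A]
    [Fintype A] (hA : ∀ a : A, p • a = 0) (H K : AddSubgroup A)
    (hsize : Nat.card H * Nat.card K = Nat.card A) :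
    ∃ φ : A → AddChar A ℂˣ, IsDuality φ ∧ (∀ a b : A, φ a b = φ b a) ∧
      lDual φ (H : Set A) = (K : Set A) ∧ rDual φ (H : Set A) = (K : Set A) ∧
      lDual φ (K : Set A) = (H : Set A) ∧ rDual φ (K : Set A) = (H : Set A) := by
  have : Fact p.Prime := ⟨hp⟩
  have : Module (ZMod p) A := AddCommGroup.zmodModule hA
  have hdim := AddSubgroup.finrank_add_finrank_eq_of_card_mul_card (p := p) hsize
  obtain ⟨B, hB_symm, hB_nondeg, hHK⟩ :=
    LinearMap.BilinForm.exists_isSymm_nondegenerate_of_finrank_add _ _ hdim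
  let χ : AddChar (ZMod p) ℂˣ := Circle.toUnits.compAddChar ZMod.toCircle
  have hχ : Injective χ := unitSphereToUnits_injective.comp ZMod.injective_toCircle
  have hφ_comm : ∀ a b, B.charPairing χ a b = B.charPairing χ b a := B.charPairing_comm hB_symm
  have hH : rDual (B.charPairing χ) H = K := by
    rw [← AddSubgroup.coe_toZModSubmodule p H, B.rDual_charPairing hχ,
      LinearMap.BilinForm.orthogonal_eq_of_finrank_add hB_nondeg hHK hdim,
      AddSubgroup.coe_toZModSubmodule]
  have hK : rDual (B.charPairing χ) K = H := by
    rw [← AddSubgroup.coe_toZModSubmodule p K, B.rDual_charPairing hχ,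
      LinearMap.BilinForm.orthogonal_eq_of_finrank_add hB_nondeg
        (fun x hx y hy => hB_symm.eq x y ▸ hHK y hy x hx) (by omega),
      AddSubgroup.coe_toZModSubmodule]
  exact ⟨B.charPairing χ, isDuality_of_injective_s10 (B.injective_charPairing hB_nondeg.1 hχ)
    (B.charPairing_add χ), hφ_comm, (lDual_eq_rDual hφ_comm _).trans hH, hH,
    (lDual_eq_rDual hφ_comm _).trans hK, hK⟩
end

section
/- Let A be a finite abelian group, H ⊆ A a subgroup, and φ₁, φ₂ two dualities of A. Then ℜ_{φ₁}(H) = ℜ_{φ₂}(H) if and only if there exists an automorphism τ of A with τ(H) = H and φ₂ = φ₁ ∘ τ. -/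
instance Complex.hasEnoughRootsOfUnity_exponent {G : Type*} [LeftCancelMonoid G] [Finite G] :
    HasEnoughRootsOfUnity ℂ (Monoid.exponent G) :=
  have : NeZero (Monoid.exponent G : ℂ) := ⟨Nat.cast_ne_zero.2 Monoid.exponent_ne_zero_of_finite⟩
  inferInstance

lemma rDual_image {A : Type*} [AddCommGroup A] (φ : A → AddChar A ℂˣ) (f : A → A) (S : Set A) :
    rDual φ (f '' S) = rDual (φ ∘ f) S := by
  ext x
  simp [rDual]

namespace IsDuality

variable {A : Type*} [AddCommGroup A] {φ : A → AddChar A ℂˣ}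

noncomputable def addEquiv (hφ : IsDuality φ) : A ≃+ AddChar A ℂˣ :=
  AddEquiv.mk' (Equiv.ofBijective φ hφ.1) hφ.2

/-- `φ` in the form `G →* (G →* Mˣ)` in which Mathlib states duality for finite abelian groups. -/
def toMonoidHom (hφ : IsDuality φ) : Multiplicative A →* (Multiplicative A →* ℂˣ) :=
  AddChar.toMonoidHomMulEquiv.toMonoidHom.comp (MonoidHom.mk' (fun a ↦ φ a.toAdd) hφ.2)

lemma toMonoidHom_injective (hφ : IsDuality φ) : Function.Injective hφ.toMonoidHom :=
  AddChar.toMonoidHomMulEquiv.injective.comp hφ.1.1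

variable [Finite A]

noncomputable def rDualSubgroup (hφ : IsDuality φ) (K : AddSubgroup A) :
    Subgroup (Multiplicative A) :=
  (CommGroup.subgroupOrderIsoSubgroupMonoidHom (Multiplicative A) ℂ).symm
    (OrderDual.toDual (K.toSubgroup.map hφ.toMonoidHom))

lemma coe_rDualSubgroup (hφ : IsDuality φ) (K : AddSubgroup A) :
    (hφ.rDualSubgroup K : Set (Multiplicative A)) = Multiplicative.toAdd ⁻¹' rDual φ K := by
  ext x
  rw [SetLike.mem_coe, rDualSubgroup, CommGroup.mem_subgroupOrderIsoSubgroupMonoidHom_symm_iff]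
  exact ⟨fun hx k hk ↦ hx _ ⟨.ofAdd k, hk, rfl⟩, fun hx _ ⟨k, hk, hψ⟩ ↦ hψ ▸ hx k.toAdd hk⟩

lemma rDualSubgroup_injective (hφ : IsDuality φ) : Function.Injective hφ.rDualSubgroup :=
  (OrderIso.injective _).comp <| OrderDual.toDual.injective.comp <|
    (Subgroup.map_injective hφ.toMonoidHom_injective).comp AddSubgroup.toSubgroup.injective

lemma rDual_injective (hφ : IsDuality φ) :
    Function.Injective fun K : AddSubgroup A ↦ rDual φ K := by
  intro K₁ K₂ (h : rDual φ K₁ = rDual φ K₂)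
  exact hφ.rDualSubgroup_injective <| SetLike.coe_injective <| by
    rw [coe_rDualSubgroup, coe_rDualSubgroup, h]

end IsDuality

/-- Two dualities give the same right dual of `H` iff they differ by an automorphism
stabilizing `H`. -/
theorem same_right_dual_iff_stabilizer {A : Type*} [AddCommGroup A] [Fintype A]
    (H : AddSubgroup A) (φ₁ φ₂ : A → AddChar A ℂˣ)
    (hφ₁ : IsDuality φ₁) (hφ₂ : IsDuality φ₂) :
    rDual φ₁ (H : Set A) = rDual φ₂ (H : Set A) ↔
      ∃ τ : AddAut A, (τ : A → A) '' (H : Set A) = (H : Set A) ∧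
        ∀ a : A, φ₂ a = φ₁ (τ a) := by
  constructor
  · intro hH
    let τ : AddAut A := hφ₂.addEquiv.trans hφ₁.addEquiv.symm
    have hτ : φ₂ = φ₁ ∘ τ := funext fun a ↦ (hφ₁.addEquiv.apply_symm_apply (φ₂ a)).symm
    have hτH : H.map τ.toAddMonoidHom = H := hφ₁.rDual_injective <| by
      change rDual φ₁ (τ '' H) = rDual φ₁ H
      rw [rDual_image, ← hτ, hH]
    exact ⟨τ, congrArg SetLike.coe hτH, congrFun hτ⟩
  · rintro ⟨τ, hτH, hτ⟩
    rw [show φ₂ = φ₁ ∘ τ from funext hτ, ← rDual_image, hτH]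
end

section
/- Let A be a finite abelian group with subgroups H, K ⊆ A, and suppose K = ℜ_{φ₀}(H) for some duality φ₀ of A. Then K = ℜ_φ(H) for every duality φ of A if and only if H is a characteristic subgroup of A. Moreover, K = ℜ_φ(H) for every duality φ if and only if K = 𝔏_φ(H) for every duality φ. -/
/-!
Two dualities differ by an automorphism: `φ = φ₀ ∘ τ` with `τ = φ₀⁻¹ ∘ φ`, and then
`ℜ_φ(H) = ℜ_{φ₀}(τ H)`. Since `ℂ` has enough roots of unity, characters of `A` detect membership
in a subgroup; as every character is `b ↦ φ₀(b)(y)` for some `y`, this makes `ℜ_{φ₀}` injective on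
subgroups. Hence `ℜ_φ(H)` is independent of `φ` exactly when `τ H = H` for all `τ`. Finally the
left dual for `φ` is the right dual for the transpose `a ↦ (b ↦ φ(b)(a))`, again a duality.
-/

open Function

namespace AddChar

variable {A : Type*} [AddCommGroup A] [Finite A]

theorem card_complexUnits : Nat.card (AddChar A ℂˣ) = Nat.card A :=
  (Nat.card_congr toMonoidHomEquiv).trans
    (CommGroup.card_monoidHom_of_hasEnoughRootsOfUnity (Multiplicative A) ℂ)

instance finite_complexUnits : Finite (AddChar A ℂˣ) :=
  Nat.finite_of_card_ne_zero (card_complexUnits.trans_ne Nat.card_pos.ne')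

theorem eq_of_forall_complexUnits_apply_eq {a b : A} (h : ∀ χ : AddChar A ℂˣ, χ a = χ b) :
    a = b :=
  (CommGroup.forall_apply_eq_apply_iff (Multiplicative A) (M := ℂ)).1
    fun χ => h (toMonoidHomEquiv.symm χ)

theorem mem_of_forall_complexUnits_apply_eq_one {H : AddSubgroup A} {x : A}
    (h : ∀ χ : AddChar A ℂˣ, (∀ y ∈ H, χ y = 1) → χ x = 1) : x ∈ H :=
  (CommGroup.forall_monoidHom_apply_eq_one_iff ℂ H.toSubgroup x).1
    fun χ hχ => h (toMonoidHomEquiv.symm χ) hχ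

end AddChar

namespace IsDuality

variable {A : Type*} [AddCommGroup A]

theorem map_zero {φ : A → AddChar A ℂˣ} (hφ : IsDuality φ) : φ 0 = 1 := by
  have h := hφ.2 0 0
  rw [add_zero] at h
  simpa using (congrArg ((φ 0)⁻¹ * ·) h).symm

theorem comp_addAut {φ : A → AddChar A ℂˣ} (hφ : IsDuality φ) (τ : AddAut A) :
    IsDuality (φ ∘ τ) :=
  ⟨hφ.1.comp τ.bijective, fun a b => by simp only [comp_apply, map_add, hφ.2]⟩

theorem exists_addAut_eq_comp {φ₀ φ : A → AddChar A ℂˣ} (hφ₀ : IsDuality φ₀)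
    (hφ : IsDuality φ) : ∃ τ : AddAut A, φ = φ₀ ∘ τ := by
  let e : A ≃ A := (Equiv.ofBijective φ hφ.1).trans (Equiv.ofBijective φ₀ hφ₀.1).symm
  have he (x : A) : φ₀ (e x) = φ x := (Equiv.ofBijective φ₀ hφ₀.1).apply_symm_apply (φ x)
  refine ⟨AddEquiv.mk' e fun a b => hφ₀.1.1 ?_, funext fun x => (he x).symm⟩
  rw [he, hφ.2, hφ₀.2, he, he]

variable [Finite A]

theorem exists_transpose {φ : A → AddChar A ℂˣ} (hφ : IsDuality φ) :
    ∃ ψ : A → AddChar A ℂˣ, IsDuality ψ ∧ ∀ a b, ψ a b = φ b a := by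
  let ψ (a : A) : AddChar A ℂˣ :=
    { toFun := fun b => φ b a
      map_zero_eq_one' := by rw [hφ.map_zero]; rfl
      map_add_eq_mul' := fun b c => by rw [hφ.2]; rfl }
  have hinj : Injective ψ := fun a b hab =>
    AddChar.eq_of_forall_complexUnits_apply_eq fun χ => by
      obtain ⟨c, rfl⟩ := hφ.1.2 χ
      exact DFunLike.congr_fun hab c
  refine ⟨ψ, ⟨?_, fun a b => AddChar.ext _ _ fun c => (φ c).map_add_eq_mul a b⟩, fun _ _ => rfl⟩
  exact (Nat.bijective_iff_injective_and_card ψ).2 ⟨hinj, AddChar.card_complexUnits.symm⟩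

theorem le_of_rDual_subset {φ : A → AddChar A ℂˣ} (hφ : IsDuality φ) {H₁ H₂ : AddSubgroup A}
    (h : rDual φ H₂ ⊆ rDual φ H₁) : H₁ ≤ H₂ := by
  obtain ⟨ψ, hψ, hψφ⟩ := hφ.exists_transpose
  intro x hx
  refine AddChar.mem_of_forall_complexUnits_apply_eq_one fun χ hχ => ?_
  obtain ⟨y, rfl⟩ := hψ.1.2 χ
  have hy : y ∈ rDual φ H₂ := fun z hz => (hψφ y z).symm.trans (hχ z hz)
  exact (hψφ y x).trans (h hy x hx)

theorem rDual_inj {φ : A → AddChar A ℂˣ} (hφ : IsDuality φ) {H₁ H₂ : AddSubgroup A} :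
    rDual φ H₁ = rDual φ H₂ ↔ H₁ = H₂ :=
  ⟨fun h => le_antisymm (hφ.le_of_rDual_subset h.ge) (hφ.le_of_rDual_subset h.le),
    fun h => h ▸ rfl⟩

end IsDuality

section DualCodes

variable {A : Type*} [AddCommGroup A]

theorem rDual_comp (φ : A → AddChar A ℂˣ) (f : A → A) (S : Set A) :
    rDual (φ ∘ f) S = rDual φ (f '' S) := by
  ext x
  simp only [rDual, Set.mem_ofPred_eq, Set.forall_mem_image, comp_apply]

theorem lDual_eq_rDual_of_flip {φ ψ : A → AddChar A ℂˣ} (h : ∀ a b, ψ a b = φ b a)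
    (S : Set A) : lDual φ S = rDual ψ S :=
  Set.ext fun _ => forall₂_congr fun _ _ => by rw [h]

theorem forall_eq_rDual_iff_forall_eq_lDual [Finite A] (S T : Set A) :
    (∀ φ : A → AddChar A ℂˣ, IsDuality φ → T = rDual φ S) ↔
      (∀ φ : A → AddChar A ℂˣ, IsDuality φ → T = lDual φ S) := by
  refine ⟨fun h φ hφ => ?_, fun h φ hφ => ?_⟩ <;> obtain ⟨ψ, hψ, hψφ⟩ := hφ.exists_transpose
  · rw [lDual_eq_rDual_of_flip hψφ]
    exact h ψ hψ
  · rw [← lDual_eq_rDual_of_flip fun a b => (hψφ b a).symm]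
    exact h ψ hψ

end DualCodes

/-- `K` is the right dual of `H` for every duality iff `H` is a characteristic subgroup;
moreover this happens iff `K` is the left dual of `H` for every duality. -/
theorem right_dual_independent_iff_characteristic {A : Type*} [AddCommGroup A] [Fintype A]
    (H K : AddSubgroup A) (φ₀ : A → AddChar A ℂˣ) (hφ₀ : IsDuality φ₀)
    (hK : (K : Set A) = rDual φ₀ (H : Set A)) :
    ((∀ φ : A → AddChar A ℂˣ, IsDuality φ → (K : Set A) = rDual φ (H : Set A)) ↔
      (∀ τ : AddAut A, (τ : A → A) '' (H : Set A) = (H : Set A))) ∧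
    ((∀ φ : A → AddChar A ℂˣ, IsDuality φ → (K : Set A) = rDual φ (H : Set A)) ↔
      (∀ φ : A → AddChar A ℂˣ, IsDuality φ → (K : Set A) = lDual φ (H : Set A))) := by
  refine ⟨⟨fun hAll τ => ?_, fun hchar φ hφ => ?_⟩, forall_eq_rDual_iff_forall_eq_lDual _ _⟩
  · have h : rDual φ₀ (H.map τ.toAddMonoidHom) = rDual φ₀ H := by
      rw [AddSubgroup.coe_map, AddEquiv.coe_toAddMonoidHom, ← rDual_comp,
        ← hAll _ (hφ₀.comp_addAut τ), hK]
    rw [← AddEquiv.coe_toAddMonoidHom, ← AddSubgroup.coe_map, hφ₀.rDual_inj.1 h]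
  · obtain ⟨τ, rfl⟩ := hφ₀.exists_addAut_eq_comp hφ
    rw [rDual_comp, hchar τ, hK]
end
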